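/- arXiv:1806.10357 — 2 statements merged into one kernel-verified Lean document; each statement's English description precedes it below -/
import Mathlib

section
/- For every even integer n ≥ 2, under the uniform probability measure on {−1,1}^n, the variance of the half-spectrum energy is bounded: V[∑_{j=0}^{n/2−1} |f_j|²] ≤ 2n² − 2n. -/
open Finset Real

/-- Expectation with respect to the uniform probability measure on `{-1,1}^n`:
`E[g] = 2^{-n} ∑_{x ∈ {-1,1}^n} g(x)`. -/
noncomputable def expect (n : ℕ) (g : (Fin n → ℝ) → ℝ) : ℝ :=
  (∑ x : Fin n → ({-1, 1} : Finset ℝ), g (fun k => (x k : ℝ))) / 2 ^ n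

/-- Variance with respect to the uniform probability measure on `{-1,1}^n`:
`V[g] = E[g²] − E[g]²`. -/
noncomputable def var (n : ℕ) (g : (Fin n → ℝ) → ℝ) : ℝ :=
  expect n (fun x => g x ^ 2) - (expect n g) ^ 2

/-- The squared amplitude of the `j`-th discrete Fourier coefficient:
`|f_j|² = (∑_k x_k cos(2πkj/n))² + (∑_k x_k sin(2πkj/n))²`. -/
noncomputable def absSqDFT (n : ℕ) (j : ℕ) (x : Fin n → ℝ) : ℝ :=
  (∑ k : Fin n, x k * Real.cos (2 * Real.pi * k * j / n)) ^ 2 +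
    (∑ k : Fin n, x k * Real.sin (2 * Real.pi * k * j / n)) ^ 2

/-!
On `{-1,1}^n` the half-spectrum energy is the quadratic form `x ⬝ᵥ A *ᵥ x` of the kernel
`A k l = ∑_{j < n/2} cos (2π (k - l) j / n)`. Because `x_k² = 1`, the diagonal of `A` only
contributes the constant `trace A`, while the monomials `x_k x_l` with `k ≠ l` are centred and
orthonormal up to swapping `k` and `l`; hence the variance is `∑_{k ≠ l} A_kl (A_kl + A_lk)`.
For even `n`, summing the Dirichlet kernel gives `A_kl = sin² (π (k - l) / 2) ∈ [0, 1]` off the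
diagonal, so each of the `n² - n` terms is at most `2`.
-/

open scoped BigOperators Matrix

lemma prod_pow_ite_eq_self {ι R : Type*} [Fintype ι] [DecidableEq ι] [CommMonoid R]
    (x : ι → R) (k : ι) : ∏ i, x i ^ (if i = k then 1 else 0) = x k := by
  simp [pow_ite, Finset.prod_ite_eq']

lemma forall_even_ite_add_iff {ι : Type*} [DecidableEq ι] {k l p q : ι} (hkl : k ≠ l) :
    (∀ i, Even ((if i = k then 1 else 0) + (if i = l then 1 else 0) +
      ((if i = p then 1 else 0) + (if i = q then 1 else 0)))) ↔
      (k = p ∧ l = q) ∨ (k = q ∧ l = p) := by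
  constructor
  · intro h
    have hk := h k
    have hl := h l
    by_cases hkp : k = p <;> by_cases hkq : k = q <;> by_cases hlp : l = p <;>
      by_cases hlq : l = q <;> simp_all [Nat.even_iff]
  · rintro (⟨rfl, rfl⟩ | ⟨rfl, rfl⟩) i <;>
      by_cases hik : i = k <;> by_cases hil : i = l <;> simp_all [Nat.even_iff]

section

variable {n : ℕ}

open Matrix

lemma expect_eq_expect_cube (g : (Fin n → ℝ) → ℝ) :
    expect n g = 𝔼 x : Fin n → ({-1, 1} : Finset ℝ), g (fun k => x k) := by
  rw [_root_.expect, Fintype.expect_eq_sum_div_card]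
  simp [Finset.card_pair (show (-1 : ℝ) ≠ 1 by norm_num)]

lemma expect_congr {g g' : (Fin n → ℝ) → ℝ} (h : ∀ x : Fin n → ℝ, (∀ i, x i ^ 2 = 1) → g x = g' x) :
    expect n g = expect n g' := by
  simp only [expect_eq_expect_cube]
  refine Finset.expect_congr rfl fun x _ => h _ fun i => ?_
  rcases Finset.mem_insert.1 (x i).2 with hx | hx <;> simp_all

lemma expect_const (c : ℝ) : expect n (fun _ => c) = c := by
  simp [expect_eq_expect_cube]

lemma expect_add (g g' : (Fin n → ℝ) → ℝ) :
    expect n (fun x => g x + g' x) = expect n g + expect n g' := by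
  simp only [expect_eq_expect_cube, Finset.expect_add_distrib]

lemma expect_const_mul (c : ℝ) (g : (Fin n → ℝ) → ℝ) :
    expect n (fun x => c * g x) = c * expect n g := by
  simp only [expect_eq_expect_cube, Finset.mul_expect]

lemma expect_sum {ι : Type*} (s : Finset ι) (g : ι → (Fin n → ℝ) → ℝ) :
    expect n (fun x => ∑ i ∈ s, g i x) = ∑ i ∈ s, expect n (g i) := by
  simp only [expect_eq_expect_cube]
  exact Finset.expect_sum_comm _ _ _

lemma sum_neg_one_one_pow (e : ℕ) :
    ∑ a : ({-1, 1} : Finset ℝ), (a : ℝ) ^ e = if Even e then 2 else 0 := by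
  rw [Finset.sum_coe_sort ({-1, 1} : Finset ℝ) (· ^ e), Finset.sum_pair (by norm_num)]
  rcases Nat.even_or_odd e with he | he
  · norm_num [he.neg_one_pow, he]
  · simp [he.neg_one_pow, Nat.not_even_iff_odd.2 he]

lemma expect_prod_pow (e : Fin n → ℕ) :
    expect n (fun x => ∏ i, x i ^ e i) = if ∀ i, Even (e i) then 1 else 0 := by
  rw [_root_.expect, ← Fintype.prod_sum (fun i (a : ({-1, 1} : Finset ℝ)) => (a : ℝ) ^ e i)]
  simp only [sum_neg_one_one_pow, Finset.prod_ite_zero, Finset.prod_const, Finset.card_univ,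
    Fintype.card_fin, Finset.mem_univ, forall_const]
  split_ifs <;> simp

lemma expect_mul_of_ne {k l : Fin n} (hkl : k ≠ l) : expect n (fun x => x k * x l) = 0 := by
  simp_rw [← prod_pow_ite_eq_self _ k, ← prod_pow_ite_eq_self _ l, ← Finset.prod_mul_distrib,
    ← pow_add, expect_prod_pow]
  refine if_neg fun h => ?_
  simpa [hkl, Nat.even_iff] using h k

lemma expect_mul_mul_mul_mul {k l : Fin n} (hkl : k ≠ l) (p q : Fin n) :
    expect n (fun x => x k * x l * (x p * x q)) =
      (if k = p ∧ l = q then 1 else 0) + (if k = q ∧ l = p then 1 else 0) := by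
  simp_rw [← prod_pow_ite_eq_self _ k, ← prod_pow_ite_eq_self _ l, ← prod_pow_ite_eq_self _ p,
    ← prod_pow_ite_eq_self _ q, ← Finset.prod_mul_distrib, ← pow_add, expect_prod_pow,
    forall_even_ite_add_iff hkl]
  split_ifs <;> grind

lemma dotProduct_mulVec_self (M : Matrix (Fin n) (Fin n) ℝ) (x : Fin n → ℝ) :
    x ⬝ᵥ M *ᵥ x = ∑ k, ∑ l, M k l * (x k * x l) := by
  simp only [dotProduct, mulVec, Finset.mul_sum]
  exact Finset.sum_congr rfl fun k _ => Finset.sum_congr rfl fun l _ => by ring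

lemma expect_dotProduct_mulVec_self {M : Matrix (Fin n) (Fin n) ℝ} (hM : ∀ k, M k k = 0) :
    expect n (fun x => x ⬝ᵥ M *ᵥ x) = 0 := by
  simp only [dotProduct_mulVec_self, expect_sum, expect_const_mul]
  refine Finset.sum_eq_zero fun k _ => Finset.sum_eq_zero fun l _ => ?_
  obtain rfl | hkl := eq_or_ne k l
  · rw [hM, zero_mul]
  · rw [expect_mul_of_ne hkl, mul_zero]

lemma expect_dotProduct_mulVec_self_sq {M : Matrix (Fin n) (Fin n) ℝ} (hM : ∀ k, M k k = 0) :
    expect n (fun x => (x ⬝ᵥ M *ᵥ x) ^ 2) = ∑ k, ∑ l, M k l * (M k l + M l k) := by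
  have hexpand : ∀ x : Fin n → ℝ, (x ⬝ᵥ M *ᵥ x) ^ 2 =
      ∑ k, ∑ l, ∑ p, ∑ q, M k l * M p q * (x k * x l * (x p * x q)) := by
    intro x
    simp_rw [dotProduct_mulVec_self, sq, Finset.sum_mul, Finset.mul_sum]
    congr! 4 with k l p q
    ring
  simp only [hexpand, expect_sum, expect_const_mul]
  refine Finset.sum_congr rfl fun k _ => Finset.sum_congr rfl fun l _ => ?_
  obtain rfl | hkl := eq_or_ne k l
  · simp [hM]
  · simp only [expect_mul_mul_mul_mul hkl, mul_add, mul_ite, mul_one, mul_zero,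
      Finset.sum_add_distrib, ite_and]
    simp

lemma var_congr {g g' : (Fin n → ℝ) → ℝ} (h : ∀ x : Fin n → ℝ, (∀ i, x i ^ 2 = 1) → g x = g' x) :
    var n g = var n g' := by
  rw [var, var, expect_congr h, expect_congr fun x hx => congrArg (· ^ 2) (h x hx)]

lemma var_const_add (c : ℝ) (g : (Fin n → ℝ) → ℝ) : var n (fun x => c + g x) = var n g := by
  simp only [var, add_sq, expect_add, expect_const, expect_const_mul]
  ring

lemma dotProduct_diagonal_mulVec_self {d x : Fin n → ℝ} (hx : ∀ i, x i ^ 2 = 1) :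
    x ⬝ᵥ diagonal d *ᵥ x = ∑ i, d i := by
  simp only [mulVec_diagonal, dotProduct]
  exact Finset.sum_congr rfl fun i _ => by linear_combination d i * hx i

theorem var_dotProduct_mulVec_self (M : Matrix (Fin n) (Fin n) ℝ) :
    var n (fun x => x ⬝ᵥ M *ᵥ x) = ∑ k, ∑ l, if k = l then 0 else M k l * (M k l + M l k) := by
  set D := M - diagonal M.diag
  have hD : ∀ k, D k k = 0 := by simp [D]
  have hsplit : ∀ x : Fin n → ℝ, (∀ i, x i ^ 2 = 1) → x ⬝ᵥ M *ᵥ x = M.trace + x ⬝ᵥ D *ᵥ x := by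
    intro x hx
    rw [Matrix.trace, ← dotProduct_diagonal_mulVec_self hx, ← dotProduct_add, ← add_mulVec,
      add_sub_cancel]
  rw [var_congr hsplit, var_const_add, var, expect_dotProduct_mulVec_self hD,
    expect_dotProduct_mulVec_self_sq hD, sq, mul_zero, sub_zero]
  refine Finset.sum_congr rfl fun k _ => Finset.sum_congr rfl fun l _ => ?_
  obtain rfl | hkl := eq_or_ne k l
  · simp [hD]
  · simp [D, hkl, hkl.symm]

end

noncomputable def dftCosKernel (n m : ℕ) : Matrix (Fin n) (Fin n) ℝ :=
  Matrix.of fun k l => ∑ j ∈ range m, cos (2 * π * ((k : ℝ) - l) * j / n)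

lemma absSqDFT_eq_sum_sum (n j : ℕ) (x : Fin n → ℝ) :
    absSqDFT n j x =
      ∑ k : Fin n, ∑ l : Fin n, cos (2 * π * ((k : ℝ) - l) * j / n) * (x k * x l) := by
  rw [absSqDFT, sq, sq, Finset.sum_mul_sum, Finset.sum_mul_sum, ← Finset.sum_add_distrib]
  refine Finset.sum_congr rfl fun k _ => ?_
  rw [← Finset.sum_add_distrib]
  refine Finset.sum_congr rfl fun l _ => ?_
  rw [show 2 * π * ((k : ℝ) - l) * j / n = 2 * π * k * j / n - 2 * π * l * j / n by ring, cos_sub]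
  ring

lemma sum_absSqDFT_eq_dotProduct_mulVec (n m : ℕ) (x : Fin n → ℝ) :
    ∑ j ∈ range m, absSqDFT n j x = x ⬝ᵥ dftCosKernel n m *ᵥ x := by
  simp only [absSqDFT_eq_sum_sum, dotProduct_mulVec_self, dftCosKernel, Matrix.of_apply,
    Finset.sum_mul]
  rw [Finset.sum_comm]
  exact Finset.sum_congr rfl fun k _ => by rw [Finset.sum_comm]

lemma dftCosKernel_half_eq_sin_sq {n : ℕ} (hn : Even n) {k l : Fin n} (hkl : k ≠ l) :
    dftCosKernel n (n / 2) k l = sin (π * ((k : ℝ) - l) / 2) ^ 2 := by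
  obtain ⟨N, rfl⟩ := hn
  set m : ℝ := (k : ℝ) - l
  set a : ℝ := π * m / N with ha_def
  have hN : (0 : ℝ) < N := Nat.cast_pos.2 (by have := k.pos; omega)
  have hm0 : m ≠ 0 := sub_ne_zero.2 (by exact_mod_cast Fin.val_ne_of_ne hkl)
  have hmlt : |m / (N + N)| < 1 := by
    rw [abs_div, abs_of_pos (add_pos hN hN), div_lt_one (add_pos hN hN)]
    have hk : ((k : ℕ) : ℝ) < N + N := by exact_mod_cast k.isLt
    have hl : ((l : ℕ) : ℝ) < N + N := by exact_mod_cast l.isLt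
    rw [abs_sub_lt_iff]
    constructor <;> linarith [(k : ℕ).cast_nonneg (α := ℝ), (l : ℕ).cast_nonneg (α := ℝ)]
  have ha : sin (a / 2) ≠ 0 := by
    have ha2 : a / 2 = π * (m / (N + N)) := by
      rw [ha_def]
      field_simp
      ring
    obtain ⟨hlo, hhi⟩ := abs_lt.1 hmlt
    rw [ha2, Ne, sin_eq_zero_iff_of_lt_of_lt (by nlinarith [pi_pos]) (by nlinarith [pi_pos])]
    exact mul_ne_zero pi_ne_zero (div_ne_zero hm0 (add_pos hN hN).ne')
  have hπm : sin (π * m) = 0 := by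
    rw [mul_sub, sin_sub, mul_comm π, mul_comm π, sin_nat_mul_pi, sin_nat_mul_pi]
    ring
  apply mul_left_cancel₀ ha
  calc sin (a / 2) * dftCosKernel (N + N) ((N + N) / 2) k l
      = sin (a / 2) * ∑ j ∈ range N, cos (a * j + 0) := by
        rw [dftCosKernel, Matrix.of_apply, show (N + N) / 2 = N by omega]
        congr! 3 with j
        rw [ha_def]
        push_cast
        field_simp
        ring
    _ = sin (N * a / 2) * cos ((N - 1) * a / 2 + 0) := sin_mul_sum_cos N a 0
    _ = sin (π * m / 2) * cos (π * m / 2 - a / 2) := by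
        rw [ha_def]
        congr 2
        · field_simp
        · field_simp
          ring
    _ = sin (a / 2) * sin (π * m / 2) ^ 2 := by
        have : sin (π * m / 2) * cos (π * m / 2) = 0 := by
          rw [← mul_div_cancel_left₀ (sin _ * _) two_ne_zero, ← mul_assoc, ← sin_two_mul,
            mul_div_cancel₀ _ two_ne_zero, hπm, zero_div]
        rw [cos_sub]
        linear_combination cos (a / 2) * this

theorem variance_half_spectrum_energy_le_general (n : ℕ) (heven : Even n) :
    var n (fun x => ∑ j ∈ Finset.range (n / 2), absSqDFT n j x) ≤
      2 * (n : ℝ) ^ 2 - 2 * n := by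
  set A := dftCosKernel n (n / 2)
  have hA : ∀ k l, k ≠ l → A k l * (A k l + A l k) ≤ 2 := by
    intro k l hkl
    simp only [A, dftCosKernel_half_eq_sin_sq heven hkl,
      dftCosKernel_half_eq_sin_sq heven hkl.symm]
    nlinarith [sin_sq_le_one (π * ((k : ℝ) - l) / 2), sin_sq_le_one (π * ((l : ℝ) - k) / 2),
      sq_nonneg (sin (π * ((k : ℝ) - l) / 2))]
  simp_rw [sum_absSqDFT_eq_dotProduct_mulVec]
  rw [var_dotProduct_mulVec_self]
  calc ∑ k, ∑ l, (if k = l then 0 else A k l * (A k l + A l k))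
      ≤ ∑ k : Fin n, ∑ l : Fin n, (2 - if k = l then 2 else 0) := by
        gcongr with k _ l _
        split_ifs with hkl
        · norm_num
        · simpa using hA k l hkl
    _ = 2 * (n : ℝ) ^ 2 - 2 * n := by
        simp only [Finset.sum_sub_distrib, Finset.sum_const, Finset.card_univ, Fintype.card_fin,
          nsmul_eq_mul, Finset.sum_ite_eq, Finset.mem_univ, if_true]
        ring

/-- For even `n ≥ 2`, the variance of the half-spectrum energy is bounded:
`V[∑_{j=0}^{n/2-1} |f_j|²] ≤ 2n² − 2n`. -/
theorem variance_half_spectrum_energy_le (n : ℕ) (hn : 2 ≤ n) (heven : Even n) :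
    var n (fun x => ∑ j ∈ Finset.range (n / 2), absSqDFT n j x) ≤
      2 * (n : ℝ) ^ 2 - 2 * n :=
  variance_half_spectrum_energy_le_general n heven
end

section
/- Let m ≥ 2 be an integer and let P be the uniform probability measure on the simplex S = {y ∈ ℝ^m : y_j ≥ 0 for all j, and ∑_{j=0}^{m−1} y_j = 2m²}. For a threshold T with 0 ≤ T² ≤ m², define N₁(y) = #{j ∈ {0, 1, …, m−1} : y_j ≤ T²}. Then the variance of N₁ under P equals m·[(1 − T²/(2m²))^{m−1} − (1 − T²/(2m²))^{2m−2}] + m(m−1)·[(1 − T²/m²)^{m−1} − (1 − T²/(2m²))^{2m−2}]. -/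
open MeasureTheory Finset

/-- The simplex `S = {y ∈ ℝ^m : y_j ≥ 0 for all j, ∑_j y_j = s}` in Euclidean space. -/
def simplex (m : ℕ) (s : ℝ) : Set (EuclideanSpace ℝ (Fin m)) :=
  {y | (∀ j, 0 ≤ y j) ∧ ∑ j, y j = s}

/-- The uniform probability measure on the simplex: the `(m-1)`-dimensional Hausdorff
measure restricted to the simplex and normalized to total mass 1. -/
noncomputable def simplexUniform (m : ℕ) (s : ℝ) : Measure (EuclideanSpace ℝ (Fin m)) :=
  (μH[(m : ℝ) - 1] (simplex m s))⁻¹ • (μH[(m : ℝ) - 1]).restrict (simplex m s)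

/-- `N₁(y)`: the number of coordinates of `y` that are at most `T²`. -/
noncomputable def None (m : ℕ) (T : ℝ) (y : EuclideanSpace ℝ (Fin m)) : ℝ :=
  ((Finset.univ.filter (fun j : Fin m => y j ≤ T ^ 2)).card : ℝ)

/-!
Write `t = T²` and `s = 2m²`. The part of the simplex where `y i ≥ t` for all `i` in a set `F`
is a translate of the simplex of total mass `s - |F| t`, so by the scaling of the
`(m-1)`-dimensional Hausdorff measure it has probability `(1 - |F| t / s) ^ (m-1)`; by continuity
from below the same holds for `y i > t`. Writing `N₁` as the sum of the indicators of
`{y i ≤ t} = {y i > t}ᶜ`, both `E[N₁]` and `E[N₁²]` follow by inclusion–exclusion from these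
probabilities with `|F| = 1, 2`. The normalization is legitimate (`0 < μH[m-1] S < ∞`) because `S`
is the graph of an affine map over the solid simplex in `ℝ^(m-1)`.
-/

open Filter
open scoped ENNReal NNReal Pointwise Topology

section Geometry

variable {m : ℕ}

lemma simplex_subset_zero_of_nonpos {s : ℝ} (hs : s ≤ 0) : simplex m s ⊆ {0} := by
  rintro y ⟨hy, hsum⟩
  have hzero := (Finset.sum_eq_zero_iff_of_nonneg fun j _ => hy j).1
    (le_antisymm (hsum ▸ hs) (Finset.sum_nonneg fun j _ => hy j))
  ext j
  simpa using hzero j (Finset.mem_univ j)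

lemma smul_simplex {c : ℝ} (hc : 0 < c) (s : ℝ) : c • simplex m s = simplex m (c * s) := by
  ext y
  refine ⟨?_, fun ⟨hy, hsum⟩ => ⟨c⁻¹ • y, ⟨fun j => ?_, ?_⟩, ?_⟩⟩
  · rintro ⟨x, ⟨hx, hsum⟩, rfl⟩
    exact ⟨fun j => mul_nonneg hc.le (hx j), by simp [← Finset.mul_sum, hsum]⟩
  · simpa using mul_nonneg (inv_nonneg.2 hc.le) (hy j)
  · simp [← Finset.mul_sum, hsum, hc.ne']
  · simp [smul_smul, hc.ne']

lemma sep_simplex_forall_le_eq_vadd (s : ℝ) (F : Finset (Fin m)) {t : ℝ} (ht : 0 ≤ t) :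
    {y ∈ simplex m s | ∀ i ∈ F, t ≤ y i} =
      WithLp.toLp 2 (fun k => if k ∈ F then t else 0) +ᵥ simplex m (s - #F * t) := by
  have hcorner : ∑ k, (if k ∈ F then t else 0) = #F * t := by
    simp [Finset.sum_ite_mem]
  ext y
  simp only [Set.mem_vadd_set, simplex, Set.mem_ofPred_eq, vadd_eq_add]
  constructor
  · rintro ⟨⟨hy, hsum⟩, hF⟩
    refine ⟨WithLp.toLp 2 (fun k => y k - if k ∈ F then t else 0), ⟨fun k => ?_, ?_⟩, ?_⟩
    · by_cases hk : k ∈ F <;> simp [hk, hF, hy]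
    · simp [Finset.sum_sub_distrib, hsum, hcorner]
    · ext k; simp
  · rintro ⟨z, ⟨hz, hsum⟩, rfl⟩
    refine ⟨⟨fun k => ?_, ?_⟩, fun i hi => ?_⟩
    · by_cases hk : k ∈ F <;> simp [hk, add_nonneg ht (hz k), hz k]
    · simp [Finset.sum_add_distrib, hsum, hcorner]
    · simpa [hi] using hz i

lemma measurableSet_simplex (s : ℝ) : MeasurableSet (simplex m s) := by
  unfold simplex
  measurability

lemma hausdorffMeasure_simplex_of_nonpos {d : ℝ} (hd : 0 < d) {s : ℝ} (hs : s ≤ 0) :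
    μH[d] (simplex m s) = 0 :=
  have := Measure.nullSingletonClass_hausdorff (EuclideanSpace ℝ (Fin m)) hd
  measure_mono_null (simplex_subset_zero_of_nonpos hs) (measure_singleton 0)

lemma hausdorffMeasure_simplex_mul {d : ℝ} (hd : 0 ≤ d) {c : ℝ} (hc : 0 < c) (s : ℝ) :
    μH[d] (simplex m (c * s)) = ENNReal.ofReal c ^ d * μH[d] (simplex m s) := by
  rw [← smul_simplex hc, Measure.hausdorffMeasure_smul₀ hd hc.ne', ENNReal.smul_def, smul_eq_mul,
    ENNReal.coe_rpow_of_nonneg _ hd, ← enorm_eq_nnnorm, Real.enorm_of_nonneg hc.le]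

lemma hausdorffMeasure_sep_simplex_forall_le {d : ℝ} (hd : 0 < d) {s : ℝ} (hs : 0 < s)
    (F : Finset (Fin m)) {t : ℝ} (ht : 0 ≤ t) :
    μH[d] {y ∈ simplex m s | ∀ i ∈ F, t ≤ y i} =
      ENNReal.ofReal (1 - #F * t / s) ^ d * μH[d] (simplex m s) := by
  rw [sep_simplex_forall_le_eq_vadd s F ht, hausdorffMeasure_vadd _ (Or.inl hd.le)]
  rcases le_or_gt (1 - #F * t / s) 0 with hc | hc
  · rw [ENNReal.ofReal_of_nonpos hc, ENNReal.zero_rpow_of_pos hd, zero_mul]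
    refine hausdorffMeasure_simplex_of_nonpos hd ?_
    rw [sub_nonpos, le_div_iff₀ hs] at hc
    linarith
  · rw [← hausdorffMeasure_simplex_mul hd.le hc]
    congr 2
    field_simp

lemma hausdorffMeasure_sep_simplex_forall_lt {d : ℝ} (hd : 0 < d) {s : ℝ} (hs : 0 < s)
    (hfin : μH[d] (simplex m s) ≠ ∞) (F : Finset (Fin m)) {t : ℝ} (ht : 0 ≤ t) :
    μH[d] {y ∈ simplex m s | ∀ i ∈ F, t < y i} =
      ENNReal.ofReal (1 - #F * t / s) ^ d * μH[d] (simplex m s) := by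
  set g : ℝ → ℝ≥0∞ := fun u => ENNReal.ofReal (1 - #F * u / s) ^ d * μH[d] (simplex m s)
  set A : ℕ → Set (EuclideanSpace ℝ (Fin m)) :=
    fun k => {y ∈ simplex m s | ∀ i ∈ F, t + 1 / (k + 1) ≤ y i}
  have ht_lim : Tendsto (fun k : ℕ => t + 1 / ((k : ℝ) + 1)) atTop (𝓝 t) := by
    simpa using tendsto_one_div_add_atTop_nhds_zero_nat.const_add t
  have hA_mono : Monotone A := by
    intro k l hkl y ⟨hy, hF⟩
    refine ⟨hy, fun i hi => le_trans ?_ (hF i hi)⟩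
    gcongr
  have hA_union : ⋃ k, A k = {y ∈ simplex m s | ∀ i ∈ F, t < y i} := by
    ext y
    simp only [Set.mem_iUnion]
    constructor
    · rintro ⟨k, hy, hF⟩
      exact ⟨hy, fun i hi => (lt_add_of_pos_right t (by positivity)).trans_le (hF i hi)⟩
    · rintro ⟨hy, hF⟩
      obtain ⟨k, hk⟩ := ((eventually_all_finset F).2 fun i hi =>
        ht_lim.eventually (eventually_le_nhds (hF i hi))).exists
      exact ⟨k, hy, hk⟩
  have hg : Continuous g :=
    (ENNReal.continuous_mul_const hfin).comp <| ENNReal.continuous_rpow_const.comp <|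
      ENNReal.continuous_ofReal.comp (by fun_prop)
  rw [← hA_union]
  refine tendsto_nhds_unique (tendsto_measure_iUnion_atTop hA_mono) ?_
  convert (hg.tendsto t).comp ht_lim using 1
  ext k
  exact hausdorffMeasure_sep_simplex_forall_le hd hs F (by positivity)

end Geometry

section Chart

variable {n : ℕ} {s : ℝ}

def solidSimplex (n : ℕ) (s : ℝ) : Set (Fin n → ℝ) :=
  {x | (∀ i, 0 ≤ x i) ∧ ∑ i, x i ≤ s}

lemma volume_solidSimplex_pos (hs : 0 < s) : 0 < volume (solidSimplex n s) := by
  have hbox : Set.Icc 0 (fun _ => s / (n + 1)) ⊆ solidSimplex n s := fun x ⟨hx0, hx⟩ => by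
    refine ⟨hx0, (Finset.sum_le_sum fun i _ => hx i).trans ?_⟩
    rw [Finset.sum_const, Finset.card_univ, Fintype.card_fin, nsmul_eq_mul, mul_div_assoc']
    exact div_le_of_le_mul₀ (by positivity) hs.le (by nlinarith)
  refine lt_of_lt_of_le ?_ (measure_mono hbox)
  simpa [Real.volume_Icc_pi] using ENNReal.pow_pos (ENNReal.ofReal_pos.2 (by positivity)) n

lemma volume_solidSimplex_lt_top : volume (solidSimplex n s) < ∞ := by
  refine lt_of_le_of_lt (measure_mono fun x ⟨hx0, hx⟩ => ?_)
    (isCompact_Icc (a := 0) (b := fun _ => s)).measure_lt_top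
  exact ⟨hx0, fun i => (Finset.single_le_sum (fun j _ => hx0 j) (Finset.mem_univ i)).trans hx⟩

def simplexChart (n : ℕ) : (Fin n → ℝ) →ₗ[ℝ] EuclideanSpace ℝ (Fin (n + 1)) where
  toFun x := WithLp.toLp 2 (Fin.cons (-∑ i, x i) x)
  map_add' x y := by
    ext j
    cases j using Fin.cases <;> simp [Finset.sum_add_distrib, add_comm]
  map_smul' c x := by
    ext j
    cases j using Fin.cases <;> simp [Finset.mul_sum]

lemma simplex_succ_eq_vadd_image :
    simplex (n + 1) s =
      EuclideanSpace.single (0 : Fin (n + 1)) s +ᵥ simplexChart n '' solidSimplex n s := by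
  ext y
  simp only [Set.mem_vadd_set, Set.mem_image, vadd_eq_add]
  constructor
  · rintro ⟨hy, hsum⟩
    rw [Fin.sum_univ_succ] at hsum
    refine ⟨_, ⟨Fin.tail y, ⟨fun i => hy i.succ, ?_⟩, rfl⟩, ?_⟩
    · simp only [Fin.tail]
      linarith [hy 0]
    ext j
    cases j using Fin.cases <;> simp [simplexChart, Fin.tail]
    linarith
  · rintro ⟨_, ⟨x, ⟨hx, hsum⟩, rfl⟩, rfl⟩
    refine ⟨fun j => ?_, ?_⟩
    · cases j using Fin.cases <;> simp [simplexChart, hx, hsum]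
    · simp [simplexChart, Fin.sum_univ_succ, Finset.sum_add_distrib]

lemma hausdorffMeasure_pi_fin : (μH[(n : ℝ)] : Measure (Fin n → ℝ)) = volume := by
  simpa using hausdorffMeasure_pi_real (ι := Fin n)

lemma hausdorffMeasure_simplex_lt_top (s : ℝ) : μH[(n : ℝ)] (simplex (n + 1) s) < ∞ := by
  obtain ⟨K, hK⟩ := (simplexChart n).toAffineMap.lipschitzWith_of_finiteDimensional
  rw [simplex_succ_eq_vadd_image, hausdorffMeasure_vadd _ (Or.inl n.cast_nonneg)]
  refine (hK.hausdorffMeasure_image_le n.cast_nonneg _).trans_lt (ENNReal.mul_lt_top ?_ ?_)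
  · exact ENNReal.rpow_lt_top_of_nonneg n.cast_nonneg ENNReal.coe_ne_top
  · rw [hausdorffMeasure_pi_fin]
    exact volume_solidSimplex_lt_top

lemma hausdorffMeasure_simplex_pos (hs : 0 < s) : 0 < μH[(n : ℝ)] (simplex (n + 1) s) := by
  let P : EuclideanSpace ℝ (Fin (n + 1)) →ₗ[ℝ] Fin n → ℝ :=
    LinearMap.funLeft ℝ ℝ Fin.succ ∘ₗ (WithLp.linearEquiv 2 ℝ (Fin (n + 1) → ℝ)).toLinearMap
  obtain ⟨K, hK⟩ := P.toAffineMap.lipschitzWith_of_finiteDimensional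
  have hPL : P '' (simplexChart n '' solidSimplex n s) = solidSimplex n s := by
    rw [Set.image_image]
    convert Set.image_id _
    ext x
    simp [P, simplexChart]
  have h := hK.hausdorffMeasure_image_le n.cast_nonneg (simplexChart n '' solidSimplex n s)
  rw [LinearMap.coe_toAffineMap, hPL, hausdorffMeasure_pi_fin] at h
  rw [simplex_succ_eq_vadd_image, hausdorffMeasure_vadd _ (Or.inl n.cast_nonneg)]
  refine pos_iff_ne_zero.2 fun h0 => ?_
  simpa [h0] using (volume_solidSimplex_pos hs).trans_le h

end Chart

section Counting

variable {Ω ι : Type*} [MeasurableSpace Ω] [Fintype ι] {μ : Measure Ω} {A : ι → Set Ω}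

lemma integral_sum_indicator_one [IsFiniteMeasure μ] (hA : ∀ i, MeasurableSet (A i)) :
    ∫ ω, ∑ i, (A i).indicator 1 ω ∂μ = ∑ i, μ.real (A i) := by
  rw [integral_finsetSum _ fun i _ => (integrable_const 1).indicator (hA i)]
  simp only [integral_indicator_one (hA _)]

lemma integral_sq_sum_indicator_one [IsFiniteMeasure μ] (hA : ∀ i, MeasurableSet (A i)) :
    ∫ ω, (∑ i, (A i).indicator 1 ω) ^ 2 ∂μ = ∑ i, ∑ j, μ.real (A i ∩ A j) := by
  have hsq : ∀ ω, (∑ i, (A i).indicator (1 : Ω → ℝ) ω) ^ 2 =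
      ∑ i, ∑ j, (A i ∩ A j).indicator 1 ω := fun ω => by
    simp only [sq, Finset.sum_mul_sum, Set.inter_indicator_one, Pi.mul_apply]
  simp only [hsq]
  rw [integral_finsetSum _ fun i _ => integrable_finsetSum _ fun j _ =>
    (integrable_const 1).indicator ((hA i).inter (hA j))]
  refine Finset.sum_congr rfl fun i _ => ?_
  rw [integral_finsetSum _ fun j _ => (integrable_const 1).indicator ((hA i).inter (hA j))]
  simp only [integral_indicator_one ((hA i).inter (hA _))]

lemma sum_sum_ite_eq {R : Type*} [CommRing R] [DecidableEq ι] (p r : R) :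
    ∑ i : ι, ∑ j : ι, (if i = j then p else r) =
      Fintype.card ι * p + Fintype.card ι * (Fintype.card ι - 1) * r := by
  have hsplit : ∀ i j : ι, (if i = j then p else r) = r + if i = j then p - r else 0 := by
    intro i j
    split_ifs <;> ring
  simp only [hsplit, Finset.sum_add_distrib, Finset.sum_ite_eq, Finset.mem_univ, if_true,
    Finset.sum_const, Finset.card_univ, nsmul_eq_mul]
  ring

lemma probReal_compl_inter_compl [IsProbabilityMeasure μ] {B C : Set Ω} (hB : MeasurableSet B)
    (hC : MeasurableSet C) :
    μ.real (Bᶜ ∩ Cᶜ) = 1 - μ.real B - μ.real C + μ.real (B ∩ C) := by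
  rw [← Set.compl_union, probReal_compl_eq_one_sub (hB.union hC)]
  linarith [measureReal_union_add_inter (μ := μ) (s := B) hC]

end Counting

section Uniform

variable {n : ℕ} {s : ℝ}

lemma simplexUniform_succ (s : ℝ) : simplexUniform (n + 1) s =
    (μH[(n : ℝ)] (simplex (n + 1) s))⁻¹ • (μH[(n : ℝ)]).restrict (simplex (n + 1) s) := by
  simp [simplexUniform]

lemma isProbabilityMeasure_simplexUniform (hs : 0 < s) :
    IsProbabilityMeasure (simplexUniform (n + 1) s) := by
  rw [simplexUniform_succ]
  constructor
  rw [Measure.smul_apply, Measure.restrict_apply_univ, smul_eq_mul,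
    ENNReal.inv_mul_cancel (hausdorffMeasure_simplex_pos hs).ne'
      (hausdorffMeasure_simplex_lt_top s).ne]

lemma simplexUniform_real_forall_lt (hn : 0 < n) (hs : 0 < s) (F : Finset (Fin (n + 1)))
    {t : ℝ} (ht : 0 ≤ t) (hFt : #F * t ≤ s) :
    (simplexUniform (n + 1) s).real {y | ∀ i ∈ F, t < y i} = (1 - #F * t / s) ^ n := by
  have hpos := hausdorffMeasure_simplex_pos (n := n) hs
  have hfin := hausdorffMeasure_simplex_lt_top (n := n) s
  have hFt' : 0 ≤ 1 - #F * t / s := by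
    rw [sub_nonneg, div_le_one hs]
    exact hFt
  rw [measureReal_def, simplexUniform_succ, Measure.smul_apply,
    Measure.restrict_apply' (measurableSet_simplex _), Set.inter_comm, ← Set.sep_mem_eq]
  simp only [Set.mem_ofPred_eq]
  rw [hausdorffMeasure_sep_simplex_forall_lt (Nat.cast_pos.2 hn) hs hfin.ne F ht]
  rw [smul_eq_mul, mul_comm, mul_assoc, ENNReal.mul_inv_cancel hpos.ne' hfin.ne, mul_one,
    ENNReal.rpow_natCast, ENNReal.toReal_pow, ENNReal.toReal_ofReal hFt']

lemma setOf_coord_le_eq_compl (m : ℕ) (i : Fin m) (t : ℝ) :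
    {y : EuclideanSpace ℝ (Fin m) | y i ≤ t} = {y | ∀ k ∈ ({i} : Finset (Fin m)), t < y k}ᶜ := by
  ext y
  simp

lemma simplexUniform_real_coord_le (hn : 0 < n) (hs : 0 < s) (i : Fin (n + 1)) {t : ℝ}
    (ht : 0 ≤ t) (hts : t ≤ s) :
    (simplexUniform (n + 1) s).real {y | y i ≤ t} = 1 - (1 - t / s) ^ n := by
  have := isProbabilityMeasure_simplexUniform (n := n) hs
  rw [setOf_coord_le_eq_compl, probReal_compl_eq_one_sub (by measurability),
    simplexUniform_real_forall_lt hn hs _ ht (by simpa using hts)]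
  simp

lemma simplexUniform_real_coord_le_inter (hn : 0 < n) (hs : 0 < s) (i j : Fin (n + 1)) {t : ℝ}
    (ht : 0 ≤ t) (h2t : 2 * t ≤ s) :
    (simplexUniform (n + 1) s).real ({y | y i ≤ t} ∩ {y | y j ≤ t}) =
      1 - 2 * (1 - t / s) ^ n + if i = j then (1 - t / s) ^ n else (1 - 2 * t / s) ^ n := by
  have := isProbabilityMeasure_simplexUniform (n := n) hs
  rcases eq_or_ne i j with rfl | hij
  · rw [Set.inter_self, simplexUniform_real_coord_le hn hs i ht (by linarith), if_pos rfl]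
    ring
  rw [setOf_coord_le_eq_compl, setOf_coord_le_eq_compl,
    probReal_compl_inter_compl (by measurability) (by measurability)]
  have hpair : {y : EuclideanSpace ℝ (Fin (n + 1)) | ∀ k ∈ ({i} : Finset _), t < y k} ∩
      {y | ∀ k ∈ ({j} : Finset _), t < y k} = {y | ∀ k ∈ ({i, j} : Finset _), t < y k} := by
    ext y
    simp
  rw [hpair, simplexUniform_real_forall_lt hn hs _ ht (by simpa using by linarith),
    simplexUniform_real_forall_lt hn hs _ ht (by simpa using by linarith),
    simplexUniform_real_forall_lt hn hs _ ht (by rw [Finset.card_pair hij]; simpa using h2t),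
    Finset.card_pair hij, if_neg hij]
  simp only [Finset.card_singleton, Nat.cast_one, Nat.cast_ofNat, one_mul]
  ring

end Uniform

lemma None_eq_sum_indicator (m : ℕ) (T : ℝ) (y : EuclideanSpace ℝ (Fin m)) :
    None m T y = ∑ j, {x : EuclideanSpace ℝ (Fin m) | x j ≤ T ^ 2}.indicator 1 y := by
  rw [None, Finset.card_filter]
  push_cast
  rfl

theorem variance_N1_simplex_general (m : ℕ) (hm : 2 ≤ m) (T : ℝ)
    (hT : T ^ 2 ≤ (m : ℝ) ^ 2) :
    (∫ y, None m T y ^ 2 ∂(simplexUniform m (2 * (m : ℝ) ^ 2))) -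
        (∫ y, None m T y ∂(simplexUniform m (2 * (m : ℝ) ^ 2))) ^ 2 =
      (m : ℝ) * ((1 - T ^ 2 / (2 * (m : ℝ) ^ 2)) ^ (m - 1) -
          (1 - T ^ 2 / (2 * (m : ℝ) ^ 2)) ^ (2 * m - 2)) +
        (m : ℝ) * ((m : ℝ) - 1) * ((1 - T ^ 2 / (m : ℝ) ^ 2) ^ (m - 1) -
          (1 - T ^ 2 / (2 * (m : ℝ) ^ 2)) ^ (2 * m - 2)) := by
  obtain ⟨n, rfl⟩ : ∃ n, m = n + 1 := ⟨m - 1, by omega⟩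
  have hn : 0 < n := by omega
  have hs : 0 < 2 * ((n + 1 : ℕ) : ℝ) ^ 2 := by positivity
  have := isProbabilityMeasure_simplexUniform (n := n) hs
  have hmeas : ∀ j : Fin (n + 1),
      MeasurableSet {y : EuclideanSpace ℝ (Fin (n + 1)) | y j ≤ T ^ 2} := fun j => by
    measurability
  simp only [None_eq_sum_indicator, integral_sum_indicator_one hmeas,
    integral_sq_sum_indicator_one hmeas,
    simplexUniform_real_coord_le hn hs _ (sq_nonneg T) (by linarith),
    simplexUniform_real_coord_le_inter hn hs _ _ (sq_nonneg T) (by linarith)]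
  simp only [Finset.sum_add_distrib, Finset.sum_const, Finset.card_univ, nsmul_eq_mul,
    sum_sum_ite_eq, Fintype.card_fin]
  rw [show 2 * (n + 1) - 2 = n * 2 by omega, pow_mul, Nat.add_sub_cancel]
  field_simp
  ring

/-- On the simplex `{y : y_j ≥ 0, ∑ y_j = 2m²}` with the uniform probability measure,
the variance `E[N₁²] − E[N₁]²` of `N₁(y) = #{j : y_j ≤ T²}` equals
`m·[(1 − T²/(2m²))^{m-1} − (1 − T²/(2m²))^{2m-2}]
  + m(m-1)·[(1 − T²/m²)^{m-1} − (1 − T²/(2m²))^{2m-2}]`. -/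
theorem variance_N1_simplex (m : ℕ) (hm : 2 ≤ m) (T : ℝ)
    (hT0 : 0 ≤ T ^ 2) (hT : T ^ 2 ≤ (m : ℝ) ^ 2) :
    (∫ y, None m T y ^ 2 ∂(simplexUniform m (2 * (m : ℝ) ^ 2))) -
        (∫ y, None m T y ∂(simplexUniform m (2 * (m : ℝ) ^ 2))) ^ 2 =
      (m : ℝ) * ((1 - T ^ 2 / (2 * (m : ℝ) ^ 2)) ^ (m - 1) -
          (1 - T ^ 2 / (2 * (m : ℝ) ^ 2)) ^ (2 * m - 2)) +
        (m : ℝ) * ((m : ℝ) - 1) * ((1 - T ^ 2 / (m : ℝ) ^ 2) ^ (m - 1) -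
          (1 - T ^ 2 / (2 * (m : ℝ) ^ 2)) ^ (2 * m - 2)) :=
  variance_N1_simplex_general m hm T hT
end
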